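/- Let m ≥ 1, r ≥ 1, α_0, b ∈ ℂ, λ_0, λ_1,…,λ_m, α_1,…,α_m ∈ ℂ* with λ_0,…,λ_m pairwise distinct. Let V be an infinite-dimensional irreducible L̄_r-module on which B_r is injective. Let A be an irreducible K-module (with invertible operator S and operator D satisfying DS − SD = S) such that the Virasoro module A_b, given by the operators L_n = S^n D + n b S^n (n ∈ ℤ) on A, is irreducible. Then the Virasoro modules M(V,Ω(λ_0,α_0)) ⊗ ⊗_{i=1}^m Ω(λ_i,α_i) and A_b are not isomorphic: there is no linear bijection between them commuting with the respective operators L_k for all k ∈ ℤ. -/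

import Mathlib

open TensorProduct

/-- Substitution `X_i ↦ X_i - k` (in the variable `i` only) on `ℂ[X_0,…,X_{N-1}]`. -/
noncomputable def shiftVar {N : ℕ} (i : Fin N) (k : ℂ) :
    MvPolynomial (Fin N) ℂ →ₗ[ℂ] MvPolynomial (Fin N) ℂ :=
  (MvPolynomial.aeval fun j =>
    MvPolynomial.X j - if j = i then MvPolynomial.C k else 0).toLinearMap

/-- The operator `L_k` on `⊗_i Ω(λ_i,α_i) = ℂ[X_0,…,X_{N-1}]`. -/
noncomputable def omegaOp {N : ℕ} (lam al : Fin N → ℂ) (k : ℤ) :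
    MvPolynomial (Fin N) ℂ →ₗ[ℂ] MvPolynomial (Fin N) ℂ :=
  ∑ i : Fin N, (lam i ^ k) •
    ((LinearMap.mulLeft ℂ (MvPolynomial.X i - MvPolynomial.C ((k : ℂ) * al i))).comp
      (shiftVar i (k : ℂ)))

/-- The operator `L_k` on `M(V,Ω(λ_0,α_0)) ⊗ ⊗_{i=1}^m Ω(λ_i,α_i) = V ⊗ ℂ[X_0,…,X_m]`. -/
noncomputable def MOp {V : Type*} [AddCommGroup V] [Module ℂ V]
    (B : ℕ → V →ₗ[ℂ] V) (r : ℕ) {m : ℕ} (lam al : Fin (m + 1) → ℂ) (k : ℤ) :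
    V ⊗[ℂ] MvPolynomial (Fin (m + 1)) ℂ →ₗ[ℂ] V ⊗[ℂ] MvPolynomial (Fin (m + 1)) ℂ :=
  TensorProduct.map LinearMap.id (omegaOp lam al k) +
  ∑ j ∈ Finset.range (r + 1),
    (((k : ℂ) ^ (j + 1)) / ((j + 1).factorial : ℂ)) •
      TensorProduct.map (B j) ((lam 0 ^ k) • shiftVar 0 (k : ℂ))

/-- The Virasoro operator `L_n = S^n D + n b S^n` on a `K`-module `A`
(`S` invertible, `D S − S D = S`). -/
noncomputable def AbOp {A : Type*} [AddCommGroup A] [Module ℂ A]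
    (S : A ≃ₗ[ℂ] A) (D : A →ₗ[ℂ] A) (b : ℂ) (n : ℤ) : A → A :=
  fun x => (S ^ n) (D x) + ((n : ℂ) * b) • (S ^ n) x

/-!
In `A_b` every vector satisfies `(L₁L₋₁ + L₋₁L₁) x = 2 L₀² x + (2b - 2b²) x`, by a direct
computation with `DS - SD = S`. On `V ⊗ ℂ[X_0,…,X_m]`, apply to `v ⊗ 1` the contraction
`v ⊗ f ↦ Δ f • v`, where `Δ f` is the mixed second difference of `f` in the variables `X_0, X_1`
(the others set to `0`). `Δ` kills every polynomial that is affine in `X_0, X_1`, hence every term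
involving the `B_j`, and on `L_{k'} L_k (v ⊗ 1)` it leaves `λ_0^{k'} λ_1^k + λ_1^{k'} λ_0^k`. The
identity then reads `λ_0/λ_1 + λ_1/λ_0 = 2`, i.e. `λ_0 = λ_1`.
-/

open MvPolynomial

noncomputable def mixedDiff (g : ℂ → ℂ → ℂ) : ℂ :=
  g 1 1 - g 1 0 - g 0 1 + g 0 0

lemma mixedDiff_eq_zero_of_affine {g : ℂ → ℂ → ℂ} (a b c : ℂ)
    (hg : ∀ s t, g s t = a * s + b * t + c) : mixedDiff g = 0 := by
  simp only [mixedDiff, hg]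
  ring

lemma mixedDiff_of_affine_mul_affine {g : ℂ → ℂ → ℂ} (a b c a' b' c' : ℂ)
    (hg : ∀ s t, g s t = (a * s + b * t + c) * (a' * s + b' * t + c')) :
    mixedDiff g = a * b' + b * a' := by
  simp only [mixedDiff, hg]
  ring

lemma mixedDiff_sum {ι : Type*} (s : Finset ι) (g : ι → ℂ → ℂ → ℂ) :
    mixedDiff (fun x y => ∑ i ∈ s, g i x y) = ∑ i ∈ s, mixedDiff (g i) := by
  simp only [mixedDiff, Finset.sum_add_distrib, Finset.sum_sub_distrib]

lemma mixedDiff_const_mul (c : ℂ) (g : ℂ → ℂ → ℂ) :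
    mixedDiff (fun s t => c * g s t) = c * mixedDiff g := by
  simp only [mixedDiff]
  ring

section Polynomial

variable {N : ℕ}

lemma aeval_shiftVar (x : Fin N → ℂ) (i : Fin N) (c : ℂ) (f : MvPolynomial (Fin N) ℂ) :
    aeval x (shiftVar i c f) = aeval (x - Pi.single i c) f := by
  rw [shiftVar, AlgHom.toLinearMap_apply, ← AlgHom.comp_apply, comp_aeval]
  congr 2
  funext j
  by_cases h : j = i <;> simp [h]

lemma aeval_omegaOp (lam al : Fin N → ℂ) (k : ℤ) (x : Fin N → ℂ) (f : MvPolynomial (Fin N) ℂ) :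
    aeval x (omegaOp lam al k f) =
      ∑ i, lam i ^ k * ((x i - k * al i) * aeval (x - Pi.single i (k : ℂ)) f) := by
  simp only [omegaOp, LinearMap.sum_apply, LinearMap.smul_apply, LinearMap.comp_apply,
    LinearMap.mulLeft_apply, map_sum, map_smul, smul_eq_mul, map_mul, map_sub, aeval_X, aeval_C,
    aeval_shiftVar, Algebra.algebraMap_self_apply]

noncomputable def omegaAffine (lam al : Fin N → ℂ) (k : ℤ) (x : Fin N → ℂ) : ℂ :=
  ∑ i, lam i ^ k * (x i - k * al i)

lemma aeval_omegaOp_one (lam al : Fin N → ℂ) (k : ℤ) (x : Fin N → ℂ) :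
    aeval x (omegaOp lam al k 1) = omegaAffine lam al k x := by
  simp [aeval_omegaOp, omegaAffine]

lemma omegaAffine_add (lam al : Fin N → ℂ) (k : ℤ) (x y : Fin N → ℂ) :
    omegaAffine lam al k (x + y) = omegaAffine lam al k x + ∑ i, lam i ^ k * y i := by
  simp only [omegaAffine, ← Finset.sum_add_distrib, Pi.add_apply]
  exact Finset.sum_congr rfl fun i _ => by ring

lemma omegaAffine_add_single (lam al : Fin N → ℂ) (k : ℤ) (x : Fin N → ℂ) (j : Fin N) (c : ℂ) :
    omegaAffine lam al k (x + Pi.single j c) = omegaAffine lam al k x + lam j ^ k * c := by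
  simp [omegaAffine_add, Pi.single_apply]

lemma omegaAffine_sub_single (lam al : Fin N → ℂ) (k : ℤ) (x : Fin N → ℂ) (j : Fin N) (c : ℂ) :
    omegaAffine lam al k (x - Pi.single j c) = omegaAffine lam al k x - lam j ^ k * c := by
  rw [sub_eq_add_neg, ← Pi.single_neg, omegaAffine_add_single]
  ring

lemma omegaAffine_single_add_single (lam al : Fin N → ℂ) (k : ℤ) (i j : Fin N) (s t : ℂ) :
    omegaAffine lam al k (Pi.single i s + Pi.single j t) =
      lam i ^ k * s + lam j ^ k * t + omegaAffine lam al k 0 := by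
  have h := omegaAffine_add_single lam al k 0 i s
  rw [zero_add] at h
  rw [omegaAffine_add_single, h]
  ring

noncomputable def mixedDiffAt (i j : Fin N) : MvPolynomial (Fin N) ℂ →ₗ[ℂ] ℂ where
  toFun f := mixedDiff fun s t => aeval (Pi.single i s + Pi.single j t) f
  map_add' f g := by
    simp only [map_add, mixedDiff]
    ring
  map_smul' c f := by
    simp only [map_smul, smul_eq_mul, RingHom.id_apply, mixedDiff]
    ring

lemma mixedDiffAt_apply (i j : Fin N) (f : MvPolynomial (Fin N) ℂ) :
    mixedDiffAt i j f = mixedDiff fun s t => aeval (Pi.single i s + Pi.single j t) f :=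
  rfl

lemma mixedDiffAt_one (i j : Fin N) : mixedDiffAt i j 1 = 0 := by
  rw [mixedDiffAt_apply]
  exact mixedDiff_eq_zero_of_affine 0 0 1 fun s t => by simp

variable (lam al : Fin N → ℂ) (i j : Fin N)

lemma mixedDiffAt_omegaOp_one (k : ℤ) : mixedDiffAt i j (omegaOp lam al k 1) = 0 := by
  rw [mixedDiffAt_apply]
  refine mixedDiff_eq_zero_of_affine (lam i ^ k) (lam j ^ k) (omegaAffine lam al k 0) fun s t => ?_
  rw [aeval_omegaOp_one, omegaAffine_single_add_single]

lemma mixedDiffAt_shiftVar_omegaOp_one (k : ℤ) (l : Fin N) (c : ℂ) :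
    mixedDiffAt i j (shiftVar l c (omegaOp lam al k 1)) = 0 := by
  rw [mixedDiffAt_apply]
  refine mixedDiff_eq_zero_of_affine (lam i ^ k) (lam j ^ k)
    (omegaAffine lam al k 0 - lam l ^ k * c) fun s t => ?_
  rw [aeval_shiftVar, aeval_omegaOp_one, omegaAffine_sub_single, omegaAffine_single_add_single]
  ring

lemma mixedDiffAt_omegaOp_omegaOp_one (k k' : ℤ) :
    mixedDiffAt i j (omegaOp lam al k' (omegaOp lam al k 1)) =
      lam i ^ k' * lam j ^ k + lam j ^ k' * lam i ^ k := by
  have heval : ∀ x, aeval x (omegaOp lam al k' (omegaOp lam al k 1)) =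
      ∑ l, lam l ^ k' * ((x l - k' * al l) * (omegaAffine lam al k x - lam l ^ k * k')) := by
    intro x
    simp only [aeval_omegaOp lam al k', aeval_omegaOp_one, omegaAffine_sub_single]
  have hterm : ∀ l, (mixedDiff fun s t =>
      ((Pi.single i s + Pi.single j t : Fin N → ℂ) l - k' * al l) *
        (omegaAffine lam al k (Pi.single i s + Pi.single j t) - lam l ^ k * k')) =
      (if l = i then 1 else 0) * lam j ^ k + (if l = j then 1 else 0) * lam i ^ k := fun l =>
    mixedDiff_of_affine_mul_affine _ _ (-(k' * al l)) (lam i ^ k) (lam j ^ k)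
      (omegaAffine lam al k 0 - lam l ^ k * k') fun s t => by
        rw [omegaAffine_single_add_single, Pi.add_apply, Pi.single_apply, Pi.single_apply]
        split_ifs <;> ring
  simp only [mixedDiffAt_apply, heval, mixedDiff_sum, mixedDiff_const_mul, hterm, mul_add,
    Finset.sum_add_distrib, ite_mul, one_mul, zero_mul, mul_ite, mul_zero, Finset.sum_ite_eq',
    Finset.mem_univ, if_true]

end Polynomial

section Tensor

variable {V : Type*} [AddCommGroup V] [Module ℂ V]

noncomputable def mixedDiffContract {N : ℕ} (i j : Fin N) :
    V ⊗[ℂ] MvPolynomial (Fin N) ℂ →ₗ[ℂ] V :=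
  (TensorProduct.rid ℂ V).toLinearMap ∘ₗ TensorProduct.map LinearMap.id (mixedDiffAt i j)

lemma mixedDiffContract_tmul {N : ℕ} (i j : Fin N) (v : V) (f : MvPolynomial (Fin N) ℂ) :
    mixedDiffContract i j (v ⊗ₜ[ℂ] f) = mixedDiffAt i j f • v := by
  simp [mixedDiffContract]

variable (B : ℕ → V →ₗ[ℂ] V) (r : ℕ) {m : ℕ} (lam al : Fin (m + 1) → ℂ)

lemma MOp_tmul (k : ℤ) (v : V) (f : MvPolynomial (Fin (m + 1)) ℂ) :
    MOp B r lam al k (v ⊗ₜ[ℂ] f) =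
      v ⊗ₜ[ℂ] omegaOp lam al k f +
      ∑ j ∈ Finset.range (r + 1), ((k : ℂ) ^ (j + 1) / (j + 1).factorial * lam 0 ^ k) •
        (B j v ⊗ₜ[ℂ] shiftVar 0 (k : ℂ) f) := by
  simp [MOp, TensorProduct.map_tmul, mul_smul]

lemma mixedDiffContract_MOp_MOp_tmul_one (i j : Fin (m + 1)) (v : V) (k k' : ℤ) :
    mixedDiffContract i j (MOp B r lam al k' (MOp B r lam al k (v ⊗ₜ[ℂ] 1))) =
      (lam i ^ k' * lam j ^ k + lam j ^ k' * lam i ^ k) • v := by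
  have hshift_one : ∀ c : ℂ, shiftVar (0 : Fin (m + 1)) c 1 = 1 := fun c => by simp [shiftVar]
  simp only [MOp_tmul, hshift_one, map_add, map_sum, map_smul, mixedDiffContract_tmul,
    mixedDiffAt_omegaOp_omegaOp_one, mixedDiffAt_omegaOp_one, mixedDiffAt_shiftVar_omegaOp_one,
    mixedDiffAt_one, zero_smul, smul_zero, Finset.sum_const_zero, add_zero]

end Tensor

lemma AbOp_anticommutator_one_neg_one {A : Type*} [AddCommGroup A] [Module ℂ A]
    (S : A ≃ₗ[ℂ] A) (D : A →ₗ[ℂ] A) (b : ℂ) (hDS : ∀ x : A, D (S x) - S (D x) = S x) (x : A) :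
    AbOp S D b 1 (AbOp S D b (-1) x) + AbOp S D b (-1) (AbOp S D b 1 x) =
      (2 : ℂ) • AbOp S D b 0 (AbOp S D b 0 x) + (2 * b - 2 * b ^ 2) • x := by
  have hDS' : ∀ y, D (S y) = S (D y) + S y := fun y => eq_add_of_sub_eq' (hDS y)
  have hDSinv : ∀ y, D (S.symm y) = S.symm (D y) - S.symm y := fun y => by
    have h := congrArg S.symm (hDS' (S.symm y))
    rw [S.apply_symm_apply, map_add, S.symm_apply_apply] at h
    rw [h]
    abel
  have hSneg : S ^ (-1 : ℤ) = S.symm := by rw [zpow_neg, zpow_one]; rfl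
  simp only [AbOp, zpow_one, hSneg, zpow_zero, LinearEquiv.coe_one, id, Int.cast_one,
    Int.cast_neg, Int.cast_zero, one_mul, zero_mul, zero_smul, add_zero, map_add, map_smul,
    map_sub, hDS', hDSinv, S.apply_symm_apply, S.symm_apply_apply]
  module

lemma eq_of_mul_inv_add_mul_inv_eq_two {K : Type*} [Field K] [NeZero (2 : K)] {a b : K}
    (h : a * b⁻¹ + b * a⁻¹ = 2) : a = b := by
  rcases eq_or_ne a 0 with rfl | ha
  · simp only [zero_mul, inv_zero, mul_zero, add_zero] at h
    exact absurd h.symm two_ne_zero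
  rcases eq_or_ne b 0 with rfl | hb
  · simp only [zero_mul, inv_zero, mul_zero, add_zero] at h
    exact absurd h.symm two_ne_zero
  field_simp at h
  have hsq : (a - b) ^ 2 = 0 := by linear_combination h
  exact sub_eq_zero.mp (pow_eq_zero_iff two_ne_zero |>.mp hsq)

theorem statement16_general {V A : Type*} [AddCommGroup V] [Module ℂ V]
    [AddCommGroup A] [Module ℂ A]
    (m r : ℕ) (hm : 1 ≤ m) (b : ℂ)
    (lam al : Fin (m + 1) → ℂ)
    (hlaminj : Function.Injective lam)
    (B : ℕ → V →ₗ[ℂ] V)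
    (hVne : ∃ v : V, v ≠ 0)
    (S : A ≃ₗ[ℂ] A) (D : A →ₗ[ℂ] A)
    (hDS : ∀ x : A, D (S x) - S (D x) = S x) :
    ¬ ∃ φ : (V ⊗[ℂ] MvPolynomial (Fin (m + 1)) ℂ) ≃ₗ[ℂ] A,
        ∀ (k : ℤ) (x : V ⊗[ℂ] MvPolynomial (Fin (m + 1)) ℂ),
          φ (MOp B r lam al k x) = AbOp S D b k (φ x) := by
  rintro ⟨φ, hφ⟩
  obtain ⟨v, hv⟩ := hVne
  set L := MOp B r lam al
  have hM : L 1 (L (-1) (v ⊗ₜ 1)) + L (-1) (L 1 (v ⊗ₜ 1)) =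
      (2 : ℂ) • L 0 (L 0 (v ⊗ₜ 1)) + (2 * b - 2 * b ^ 2) • (v ⊗ₜ 1) :=
    φ.injective <| by
      simpa only [map_add, map_smul, hφ] using
        AbOp_anticommutator_one_neg_one S D b hDS (φ (v ⊗ₜ 1))
  have hcontract := congrArg (mixedDiffContract 0 1) hM
  simp only [L, map_add, map_smul, mixedDiffContract_MOp_MOp_tmul_one, mixedDiffContract_tmul,
    mixedDiffAt_one, zero_smul, smul_zero, add_zero, smul_smul, ← add_smul] at hcontract
  have hscalar := smul_left_injective ℂ hv hcontract
  simp only [zpow_one, zpow_neg, zpow_zero, mul_one] at hscalar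
  have h01 : (0 : Fin (m + 1)) ≠ 1 := by
    rw [Ne, Fin.ext_iff, Fin.val_zero, Fin.val_one', Nat.mod_eq_of_lt (by omega)]
    exact zero_ne_one
  exact h01 (hlaminj (eq_of_mul_inv_add_mul_inv_eq_two (by linear_combination hscalar / 2)))

/-- **Proposition 5.3 (third part).** Let `m ≥ 1`, `r ≥ 1`, `α_0, b ∈ ℂ`,
`λ_0,…,λ_m, α_1,…,α_m ∈ ℂ*` with `λ_0,…,λ_m` pairwise distinct. Let `V` be an
infinite-dimensional irreducible `L̄_r`-module with `B_r` injective, and `A` an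
irreducible `K`-module such that the Virasoro module `A_b` is irreducible.
Then `M(V,Ω(λ_0,α_0)) ⊗ ⊗_{i=1}^m Ω(λ_i,α_i) ≇ A_b`. -/
theorem statement16 {V A : Type*} [AddCommGroup V] [Module ℂ V]
    [AddCommGroup A] [Module ℂ A]
    (m r : ℕ) (hm : 1 ≤ m) (hr : 1 ≤ r) (b : ℂ)
    (lam al : Fin (m + 1) → ℂ)
    (hlam : ∀ i, lam i ≠ 0) (hlaminj : Function.Injective lam)
    (hal : ∀ i, i ≠ 0 → al i ≠ 0)
    (B : ℕ → V →ₗ[ℂ] V)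
    (hBtop : ∀ i, r < i → B i = 0)
    (hBrel : ∀ i j, i ≤ r → j ≤ r →
      B i ∘ₗ B j - B j ∘ₗ B i = (((j : ℂ) - (i : ℂ)) • B (i + j) : V →ₗ[ℂ] V))
    (hVne : ∃ v : V, v ≠ 0)
    (hVirr : ∀ U : Submodule ℂ V, (∀ i, i ≤ r → ∀ w ∈ U, B i w ∈ U) → U = ⊥ ∨ U = ⊤)
    (hVinf : ¬ Module.Finite ℂ V)
    (hBrinj : Function.Injective (B r))
    (S : A ≃ₗ[ℂ] A) (D : A →ₗ[ℂ] A)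
    (hDS : ∀ x : A, D (S x) - S (D x) = S x)
    (hAne : ∃ x : A, x ≠ 0)
    (hKirr : ∀ U : Submodule ℂ A,
      (∀ x ∈ U, S x ∈ U) → (∀ x ∈ U, S.symm x ∈ U) → (∀ x ∈ U, D x ∈ U) →
      U = ⊥ ∨ U = ⊤)
    (hAbirr : ∀ U : Submodule ℂ A,
      (∀ n : ℤ, ∀ x ∈ U, AbOp S D b n x ∈ U) → U = ⊥ ∨ U = ⊤) :
    ¬ ∃ φ : (V ⊗[ℂ] MvPolynomial (Fin (m + 1)) ℂ) ≃ₗ[ℂ] A,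
        ∀ (k : ℤ) (x : V ⊗[ℂ] MvPolynomial (Fin (m + 1)) ℂ),
          φ (MOp B r lam al k x) = AbOp S D b k (φ x) :=
  statement16_general m r hm b lam al hlaminj B hVne S D hDS
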